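/- Let G = (U,α) and H = (V,β) be fully supported weighted graphs and let c : U × V → [0,∞) be a cost function. If γ ∈ J*(α,β) (the set of weight joinings minimizing ⟨c, r_γ⟩ over J(α,β)) is bijective, then γ is an extreme point of J*(α,β). -/

import Mathlib

open Finset

def IsWeightFunction {U : Type*} [Fintype U] (α : U → U → ℝ) : Prop :=
  (∀ u u', 0 ≤ α u u') ∧ (∀ u u', α u u' = α u' u) ∧ (∑ u, ∑ u', α u u' = 1)

noncomputable def marginal {U : Type*} [Fintype U] (α : U → U → ℝ) (u : U) : ℝ :=
  ∑ u', α u u'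

def IsWeightJoining {U V : Type*} [Fintype U] [Fintype V]
    (α : U → U → ℝ) (β : V → V → ℝ) (γ : U × V → U × V → ℝ) : Prop :=
  IsWeightFunction γ ∧
  (∀ u, ∑ v, marginal γ (u, v) = marginal α u) ∧
  (∀ v, ∑ u, marginal γ (u, v) = marginal β v) ∧
  (∀ u u' v, marginal α u * ∑ v', γ (u, v) (u', v') = α u u' * marginal γ (u, v)) ∧
  (∀ v v' u, marginal β v * ∑ u', γ (u, v) (u', v') = β v v' * marginal γ (u, v))

def weightJoinings {U V : Type*} [Fintype U] [Fintype V]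
    (α : U → U → ℝ) (β : V → V → ℝ) : Set (U × V → U × V → ℝ) :=
  {γ | IsWeightJoining α β γ}

noncomputable def ogjCost {U V : Type*} [Fintype U] [Fintype V]
    (c : U → V → ℝ) (γ : U × V → U × V → ℝ) : ℝ :=
  ∑ p : U × V, c p.1 p.2 * marginal γ p

/-- A weight joining is bijective if each `u ∈ U` has a unique `v ∈ V` with positive
joint marginal and vice versa. -/
def IsBijectiveJoining {U V : Type*} [Fintype U] [Fintype V]
    (γ : U × V → U × V → ℝ) : Prop :=
  (∀ u : U, ∃! v : V, 0 < marginal γ (u, v)) ∧ (∀ v : V, ∃! u : U, 0 < marginal γ (u, v))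

/-- `γ` is an extreme point of the convex set `C`. -/
def IsExtremePointOf {X : Type*} [AddCommGroup X] [Module ℝ X] (C : Set X) (γ : X) : Prop :=
  γ ∈ C ∧ ∀ γ₁ ∈ C, ∀ γ₂ ∈ C, ∀ t : ℝ, 0 < t → t < 1 →
    γ = t • γ₁ + (1 - t) • γ₂ → γ = γ₁ ∧ γ = γ₂

/-- The set `J*(α,β)` of weight joinings minimizing the cost `⟨c, r_γ⟩`. -/
def optimalJoinings {U V : Type*} [Fintype U] [Fintype V]
    (α : U → U → ℝ) (β : V → V → ℝ) (c : U → V → ℝ) : Set (U × V → U × V → ℝ) :=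
  {γ ∈ weightJoinings α β | ∀ γ' ∈ weightJoinings α β, ogjCost c γ ≤ ogjCost c γ'}

/-! A joining whose marginal is carried by the graph of a map `φ : U → V` is forced by the
transition coupling to be `α` transported along `u ↦ (u, φ u)`. Writing a bijective joining
as a convex combination of two joinings, both summands have their marginals carried by the
same graph, so both equal it: a bijective joining is extreme among all joinings, hence
among the optimal ones. -/

lemma IsExtremePointOf.mono {X : Type*} [AddCommGroup X] [Module ℝ X] {C D : Set X} {γ : X}
    (h : IsExtremePointOf D γ) (hCD : C ⊆ D) (hγ : γ ∈ C) : IsExtremePointOf C γ :=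
  ⟨hγ, fun γ₁ h₁ γ₂ h₂ t ht0 ht1 heq => h.2 γ₁ (hCD h₁) γ₂ (hCD h₂) t ht0 ht1 heq⟩

section Marginal

variable {U : Type*} [Fintype U]

lemma marginal_nonneg {α : U → U → ℝ} (hα : ∀ u u', 0 ≤ α u u') (u : U) :
    0 ≤ marginal α u :=
  sum_nonneg fun u' _ => hα u u'

lemma marginal_eq_zero_iff {α : U → U → ℝ} (hα : ∀ u u', 0 ≤ α u u') {u : U} :
    marginal α u = 0 ↔ ∀ u', α u u' = 0 := by
  simp [marginal, sum_eq_zero_iff_of_nonneg fun u' _ => hα u u']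

lemma marginal_add_smul (s t : ℝ) (α β : U → U → ℝ) (u : U) :
    marginal (s • α + t • β) u = s * marginal α u + t * marginal β u := by
  simp only [marginal, Pi.add_apply, Pi.smul_apply, smul_eq_mul, sum_add_distrib, mul_sum]

end Marginal

namespace IsWeightJoining

variable {U V : Type*} [Fintype U] [Fintype V] {α : U → U → ℝ} {β : V → V → ℝ}
  {γ : U × V → U × V → ℝ}

section Graph

variable (hγ : IsWeightJoining α β γ) {φ : U → V}
  (hφ : ∀ u v, v ≠ φ u → marginal γ (u, v) = 0)
include hγ hφ

lemma apply_eq_zero_of_ne_left {u : U} {v : V} (hv : v ≠ φ u) (y : U × V) : γ (u, v) y = 0 :=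
  (marginal_eq_zero_iff hγ.1.1).1 (hφ u v hv) y

lemma apply_eq_zero_of_ne_right {u' : U} {v' : V} (hv' : v' ≠ φ u') (x : U × V) :
    γ x (u', v') = 0 := by
  rw [hγ.1.2.1]
  exact hγ.apply_eq_zero_of_ne_left hφ hv' x

lemma marginal_graph (u : U) : marginal γ (u, φ u) = marginal α u := by
  rw [← hγ.2.1 u, sum_eq_single (φ u) (fun v _ hv => hφ u v hv) (by simp)]

lemma apply_graph (hαfull : ∀ u, 0 < marginal α u) (u u' : U) :
    γ (u, φ u) (u', φ u') = α u u' := by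
  have htc := hγ.2.2.2.1 u u' (φ u)
  rwa [hγ.marginal_graph hφ, sum_eq_single (φ u')
      (fun v' _ hv' => hγ.apply_eq_zero_of_ne_right hφ hv' _) (by simp), mul_comm (α u u'),
    mul_right_inj' (hαfull u).ne'] at htc

open Classical in
lemma apply_eq_of_supported_on_graph (hαfull : ∀ u, 0 < marginal α u) (u u' : U) (v v' : V) :
    γ (u, v) (u', v') = if v = φ u ∧ v' = φ u' then α u u' else 0 := by
  split_ifs with h
  · obtain ⟨rfl, rfl⟩ := h
    exact hγ.apply_graph hφ hαfull u u'
  · rcases not_and_or.1 h with hv | hv'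
    · exact hγ.apply_eq_zero_of_ne_left hφ hv _
    · exact hγ.apply_eq_zero_of_ne_right hφ hv' _

end Graph

lemma eq_of_supported_on_graph {γ' : U × V → U × V → ℝ} (hγ : IsWeightJoining α β γ)
    (hγ' : IsWeightJoining α β γ') (hαfull : ∀ u, 0 < marginal α u) (φ : U → V)
    (hφ : ∀ u v, v ≠ φ u → marginal γ (u, v) = 0)
    (hφ' : ∀ u v, v ≠ φ u → marginal γ' (u, v) = 0) : γ = γ' := by
  funext ⟨u, v⟩ ⟨u', v'⟩
  rw [hγ.apply_eq_of_supported_on_graph hφ hαfull, hγ'.apply_eq_of_supported_on_graph hφ' hαfull]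

end IsWeightJoining

lemma isExtremePointOf_weightJoinings_of_supported_on_graph {U V : Type*} [Fintype U]
    [Fintype V] {α : U → U → ℝ} {β : V → V → ℝ} (hαfull : ∀ u, 0 < marginal α u)
    {γ : U × V → U × V → ℝ} (hγ : IsWeightJoining α β γ) (φ : U → V)
    (hφ : ∀ u v, v ≠ φ u → marginal γ (u, v) = 0) :
    IsExtremePointOf (weightJoinings α β) γ := by
  refine ⟨hγ, fun γ₁ (h₁ : IsWeightJoining α β γ₁) γ₂ (h₂ : IsWeightJoining α β γ₂) t ht0 ht1
    heq => ?_⟩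
  have hsplit : ∀ u v, v ≠ φ u → marginal γ₁ (u, v) = 0 ∧ marginal γ₂ (u, v) = 0 := by
    intro u v hv
    have hzero := hφ u v hv
    rw [heq, marginal_add_smul] at hzero
    obtain ⟨hz₁, hz₂⟩ := (add_eq_zero_iff_of_nonneg
      (mul_nonneg ht0.le (marginal_nonneg h₁.1.1 _))
      (mul_nonneg (sub_nonneg.2 ht1.le) (marginal_nonneg h₂.1.1 _))).1 hzero
    exact ⟨(mul_eq_zero.1 hz₁).resolve_left ht0.ne',
      (mul_eq_zero.1 hz₂).resolve_left (sub_ne_zero.2 ht1.ne')⟩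
  exact ⟨hγ.eq_of_supported_on_graph h₁ hαfull φ hφ fun u v hv => (hsplit u v hv).1,
    hγ.eq_of_supported_on_graph h₂ hαfull φ hφ fun u v hv => (hsplit u v hv).2⟩

theorem bijective_optimal_joining_is_extreme_general
    {U V : Type*} [Fintype U] [Fintype V]
    (α : U → U → ℝ) (β : V → V → ℝ)
    (hαfull : ∀ u, 0 < marginal α u)
    (c : U → V → ℝ)
    (γ : U × V → U × V → ℝ)
    (hγ : γ ∈ optimalJoinings α β c)
    (hbij : IsBijectiveJoining γ) :
    IsExtremePointOf (optimalJoinings α β c) γ := by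
  have hγj : IsWeightJoining α β γ := hγ.1
  choose φ _ hφuniq using hbij.1
  have hφ : ∀ u v, v ≠ φ u → marginal γ (u, v) = 0 := fun u v hv =>
    (marginal_nonneg hγj.1.1 (u, v)).eq_or_lt.elim Eq.symm fun hpos => absurd (hφuniq u v hpos) hv
  exact (isExtremePointOf_weightJoinings_of_supported_on_graph hαfull hγj φ hφ).mono
    (fun _ h => h.1) hγ

/-- For fully supported weighted graphs and a nonnegative cost `c`,
any bijective optimal weight joining `γ ∈ J*(α,β)` is an extreme point of `J*(α,β)`. -/
theorem bijective_optimal_joining_is_extreme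
    {U V : Type*} [Fintype U] [Fintype V]
    (α : U → U → ℝ) (β : V → V → ℝ)
    (hα : IsWeightFunction α) (hβ : IsWeightFunction β)
    (hαfull : ∀ u, 0 < marginal α u) (hβfull : ∀ v, 0 < marginal β v)
    (c : U → V → ℝ) (hc : ∀ u v, 0 ≤ c u v)
    (γ : U × V → U × V → ℝ)
    (hγ : γ ∈ optimalJoinings α β c)
    (hbij : IsBijectiveJoining γ) :
    IsExtremePointOf (optimalJoinings α β c) γ :=
  bijective_optimal_joining_is_extreme_general α β hαfull c γ hγ hbij
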